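/- arXiv:1511.00075 — 9 statements merged into one kernel-verified Lean document; each statement's English description precedes it below -/
import Mathlib

section
/- Let c, Δ, t be positive integers with Δ < t, and let V be a subset of [t]^c (the set of c-tuples with entries in {1,...,t}). Suppose there exists a function θ : V → [c] such that for every i ∈ [c], the set { v(i) : v ∈ V and θ(v) = i } has at most t − Δ elements. Then |V| ≤ t^c − Δ^c. -/
/-- Lemma 4.3 / `productgap`.
Let `c, Δ, t` be positive integers with `Δ < t`, and let `V ⊆ [t]^c`.
If there is `θ : V → [c]` such that for every `i ∈ [c]` the set
`{v(i) : v ∈ V, θ(v) = i}` has at most `t - Δ` elements, then `|V| ≤ t^c - Δ^c`. -/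
theorem product_gap (c Δ t : ℕ) (hc : 0 < c) (hΔ : 0 < Δ) (hΔt : Δ < t)
    (V : Finset (Fin c → Fin t)) (θ : (Fin c → Fin t) → Fin c)
    (hθ : ∀ i : Fin c,
      ((V.filter (fun v => θ v = i)).image (fun v => v i)).card ≤ t - Δ) :
    V.card ≤ t ^ c - Δ ^ c := by
  set S : Fin c → Finset (Fin t) :=
    fun i => (V.filter (fun v => θ v = i)).image (fun v => v i) with hS
  have hsub : V ⊆ (Fintype.piFinset (fun i => (S i)ᶜ))ᶜ := by
    intro v hv
    simp only [Finset.mem_compl, Fintype.mem_piFinset, not_forall]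
    refine ⟨θ v, ?_⟩
    simp only [Finset.mem_compl, not_not]
    exact Finset.mem_image.2 ⟨v, Finset.mem_filter.2 ⟨hv, rfl⟩, rfl⟩
  have hcard : Fintype.card (Fin c → Fin t) = t ^ c := by
    simp [Fintype.card_fin]
  have h1 : V.card ≤ t ^ c - (Fintype.piFinset (fun i => (S i)ᶜ)).card := by
    calc V.card ≤ ((Fintype.piFinset (fun i => (S i)ᶜ))ᶜ).card :=
          Finset.card_le_card hsub
      _ = t ^ c - (Fintype.piFinset (fun i => (S i)ᶜ)).card := by
          rw [Finset.card_compl, hcard]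
  have h2 : Δ ^ c ≤ (Fintype.piFinset (fun i => (S i)ᶜ)).card := by
    rw [Fintype.card_piFinset]
    have hpc : Δ ^ c = ∏ _i : Fin c, Δ := by simp
    rw [hpc]
    refine Finset.prod_le_prod (fun i _ => Nat.zero_le _) (fun i _ => ?_)
    rw [Finset.card_compl, Fintype.card_fin]
    have h := hθ i
    simp only [hS]
    refine Nat.le_sub_of_add_le ?_
    calc Δ + ((V.filter (fun v => θ v = i)).image (fun v => v i)).card
        ≤ Δ + (t - Δ) := Nat.add_le_add_left h Δ
      _ = t := Nat.add_sub_cancel' hΔt.le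
  have h3 : (Fintype.piFinset (fun i => (S i)ᶜ)).card ≤ t ^ c := by
    rw [← hcard]
    exact Finset.card_le_univ _
  calc V.card ≤ t ^ c - (Fintype.piFinset (fun i => (S i)ᶜ)).card := h1
    _ ≤ t ^ c - Δ ^ c := Nat.sub_le_sub_left h2 _
end

section
/- Let H be a finite bipartite graph with parts A and B (all edges between A and B), let X ⊆ A and Y ⊆ B be finite, and let s be a positive integer. Suppose every vertex y ∈ Y has at least s neighbors in X. Then there exists an s-element subset S ⊆ X such that the number of vertices y ∈ Y adjacent to every vertex of S is at least |Y| / C(|X|, s), where C(|X|, s) is the binomial coefficient. -/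
/-- pigeonhole for common neighbors.
In a finite bipartite graph with parts `A` (modelled by the type `α`) and `B`
(modelled by `β`), with edge relation `E`, if every `y ∈ Y` has at least `s`
neighbors in `X`, then some `s`-element subset `S ⊆ X` has at least
`|Y| / C(|X|, s)` common neighbors inside `Y`. -/
theorem pigeonhole_common_neighbors {α β : Type*} [Fintype α] [Fintype β]
    (E : α → β → Prop) (X : Finset α) (Y : Finset β) (s : ℕ) (hs : 0 < s)
    (hsX : s ≤ X.card)
    (hdeg : ∀ y ∈ Y, s ≤ {x : α | x ∈ X ∧ E x y}.ncard) :
    ∃ S ⊆ X, S.card = s ∧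
      (Y.card : ℝ) / (X.card.choose s : ℝ) ≤
        ({y : β | y ∈ Y ∧ ∀ x ∈ S, E x y}.ncard : ℝ) := by
  classical
  set N : β → Finset α := fun y => X.filter (fun x => E x y) with hN
  have hNcard : ∀ y ∈ Y, s ≤ (N y).card := by
    intro y hy
    have h1 := hdeg y hy
    have h2 : {x : α | x ∈ X ∧ E x y}.ncard = (N y).card := by
      rw [Set.ncard_eq_toFinset_card']
      congr 1
      ext x; simp [hN]
    omega
  set P := X.powersetCard s with hP
  have hPne : P.Nonempty := by
    rw [hP, Finset.powersetCard_nonempty]; exact hsX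
  have hPcard : P.card = X.card.choose s := Finset.card_powersetCard s X
  have hCpos : 0 < X.card.choose s := Nat.choose_pos hsX
  -- each y ∈ Y has at least one S ∈ P with S ⊆ N y
  have hsum : (Y.card : ℕ) ≤ ∑ S ∈ P, (Y.filter (fun y => S ⊆ N y)).card := by
    have hswap : ∑ S ∈ P, (Y.filter (fun y => S ⊆ N y)).card
        = ∑ y ∈ Y, (P.filter (fun S => S ⊆ N y)).card := by
      simp only [Finset.card_filter]
      rw [Finset.sum_comm]
    rw [hswap]
    have : ∀ y ∈ Y, 1 ≤ (P.filter (fun S => S ⊆ N y)).card := by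
      intro y hy
      obtain ⟨T, hT, hTc⟩ := Finset.exists_subset_card_eq (hNcard y hy)
      have hTX : T ⊆ X := hT.trans (Finset.filter_subset _ _)
      have : T ∈ P.filter (fun S => S ⊆ N y) := by
        simp [hP, Finset.mem_powersetCard, hTX, hTc, hT]
      exact Finset.card_pos.mpr ⟨T, this⟩
    calc (Y.card : ℕ) = ∑ y ∈ Y, 1 := by simp
    _ ≤ _ := Finset.sum_le_sum this
  -- pick S achieving the average
  have hex : ∃ S ∈ P, (Y.card : ℝ) / (X.card.choose s : ℝ)
      ≤ ((Y.filter (fun y => S ⊆ N y)).card : ℝ) := by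
    by_contra h
    push_neg at h
    have hlt : ∑ S ∈ P, ((Y.filter (fun y => S ⊆ N y)).card : ℝ)
        < ∑ S ∈ P, (Y.card : ℝ) / (X.card.choose s : ℝ) :=
      Finset.sum_lt_sum_of_nonempty hPne h
    rw [Finset.sum_const, hPcard, nsmul_eq_mul,
      mul_div_cancel₀ _ (by positivity : (X.card.choose s : ℝ) ≠ 0)] at hlt
    have : (Y.card : ℝ) ≤ ∑ S ∈ P, ((Y.filter (fun y => S ⊆ N y)).card : ℝ) := by
      exact_mod_cast (Nat.cast_le.mpr hsum).trans_eq (by push_cast; ring)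
    linarith
  obtain ⟨S, hSP, hSle⟩ := hex
  rw [hP, Finset.mem_powersetCard] at hSP
  refine ⟨S, hSP.1, hSP.2, hSle.trans ?_⟩
  have hsub : (Y.filter (fun y => S ⊆ N y)).card
      ≤ {y : β | y ∈ Y ∧ ∀ x ∈ S, E x y}.ncard := by
    rw [Set.ncard_eq_toFinset_card']
    apply Finset.card_le_card
    intro y hy
    simp only [Finset.mem_filter] at hy
    simp only [Set.mem_toFinset, Set.mem_setOf_eq]
    refine ⟨hy.1, fun x hx => ?_⟩
    have := hy.2 hx
    simp [hN] at this
    exact this.2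
  exact_mod_cast hsub
end

section
/- Let H₀ be a finite bipartite graph with parts A₀ and B₀ (all edges between A₀ and B₀), let Δ be a positive integer, and define the bipartite graph H₁ with parts A₁ = A₀ × [Δ] and B₁ = B₀, where (u,i) ∈ A₁ is adjacent to v ∈ B₁ if and only if u is adjacent to v in H₀. Then: (1) if S is an s-element subset of A₀ with at least d common neighbors in B₀, then the Δs-element set S × [Δ] ⊆ A₁ has at least d common neighbors in B₁; and (2) if s ≥ 1 and every s-element subset of A₀ has at most m common neighbors in B₀, then every (Δ(s−1)+1)-element subset of A₁ has at most m common neighbors in B₁. -/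
/-- bipartite blow-up.
Given a bipartite graph with parts `α`, `β` and edge relation `E`, form the
bipartite graph with parts `α × Fin Δ` and `β` where `(u, i)` is adjacent to `v`
iff `E u v`.  Then:
(1) if some `s`-element subset `S ⊆ α` has at least `d` common neighbors, then
the `Δ·s`-element set `S × [Δ]` has at least `d` common neighbors; and
(2) if `s ≥ 1` and every `s`-element subset of `α` has at most `m` common
neighbors, then every `(Δ(s-1)+1)`-element subset of `α × Fin Δ` has at most
`m` common neighbors. -/
theorem bipartite_blowup {α β : Type*} [Fintype α] [Fintype β]
    (E : α → β → Prop) (Δ : ℕ) (hΔ : 0 < Δ) (s d m : ℕ) :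
    (∀ S : Finset α, S.card = s →
      d ≤ {v : β | ∀ u ∈ S, E u v}.ncard →
      ((S ×ˢ (Finset.univ : Finset (Fin Δ))).card = Δ * s ∧
        d ≤ {v : β | ∀ p ∈ S ×ˢ (Finset.univ : Finset (Fin Δ)), E p.1 v}.ncard))
    ∧ (1 ≤ s →
       (∀ S : Finset α, S.card = s → {v : β | ∀ u ∈ S, E u v}.ncard ≤ m) →
       ∀ T : Finset (α × Fin Δ), T.card = Δ * (s - 1) + 1 →
         {v : β | ∀ p ∈ T, E p.1 v}.ncard ≤ m) := by
  constructor
  · intro S hS hd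
    constructor
    · rw [Finset.card_product, hS, Finset.card_univ, Fintype.card_fin, Nat.mul_comm]
    · refine le_trans hd (le_of_eq (congrArg Set.ncard ?_))
      ext v
      simp only [Set.mem_setOf_eq, Finset.mem_product, Finset.mem_univ, and_true]
      constructor
      · intro h p hp
        exact h p.1 hp
      · intro h u hu
        exact h (u, ⟨0, hΔ⟩) hu
  · intro hs hm T hT
    classical
    -- image of T under fst has at least s elements
    have hfib : ∀ a ∈ T.image Prod.fst,
        (T.filter (fun p => p.1 = a)).card ≤ Δ := by
      intro a _
      calc (T.filter (fun p => p.1 = a)).card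
          ≤ ({a} ×ˢ (Finset.univ : Finset (Fin Δ))).card := by
            apply Finset.card_le_card
            intro p hp
            simp only [Finset.mem_filter] at hp
            simp only [Finset.mem_product, Finset.mem_singleton, Finset.mem_univ, and_true]
            exact hp.2
        _ = Δ := by simp
    have hcard : T.card ≤ Δ * (T.image Prod.fst).card :=
      Finset.card_le_mul_card_image T Δ hfib
    have himg : s ≤ (T.image Prod.fst).card := by
      by_contra h
      push_neg at h
      have : (T.image Prod.fst).card ≤ s - 1 := Nat.le_sub_one_of_lt h
      have := hcard.trans (Nat.mul_le_mul_left Δ this)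
      omega
    obtain ⟨S, hSsub, hScard⟩ := Finset.exists_subset_card_eq himg
    refine le_trans (Set.ncard_le_ncard ?_ (Set.toFinite _)) (hm S hScard)
    intro v hv u hu
    obtain ⟨p, hp, hpu⟩ := Finset.mem_image.mp (hSsub hu)
    exact hpu ▸ hv p hp
end

section
/- For all integers n, k with 1 ≤ k ≤ n, there exists a family Λ of functions from Fin n to Fin k with |Λ| ≤ ⌈e^k · k · log n⌉ + 1 (natural logarithm) such that for every k-element subset X of Fin n there is a function h ∈ Λ whose restriction to X is injective. -/
open Finset

/-- Counting lemma: for a fixed `k`-set `X`, at least `k! * k^(n-k)` functions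
`Fin n → Fin k` are injective on `X`. -/
lemma cc_count (n k : ℕ) (X : Finset (Fin n)) (hX : X.card = k) :
    k.factorial * k ^ (n - k) ≤
      (Finset.univ.filter (fun f : Fin n → Fin k => Set.InjOn f ↑X)).card := by
  classical
  have hcardX : Fintype.card (↑X : Type) = k := by simp [hX]
  have hcardXc : Fintype.card (↑(Xᶜ) : Type) = n - k := by
    simp [Finset.card_compl, hX]
  -- an injection from (X ≃ Fin k) × ((Xᶜ) → Fin k) into the functions injective on X
  let Φ : ((↑X : Type) ≃ Fin k) × ((↑(Xᶜ) : Type) → Fin k) →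
      {f : Fin n → Fin k // Set.InjOn f ↑X} := fun p =>
    ⟨fun i => if h : i ∈ X then p.1 ⟨i, h⟩ else p.2 ⟨i, Finset.mem_compl.mpr h⟩, by
      intro a ha b hb hab
      simp only [Set.mem_setOf_eq, Finset.mem_coe] at ha hb
      simp only [dif_pos ha, dif_pos hb] at hab
      have := p.1.injective hab
      exact congrArg Subtype.val this⟩
  have hΦ : Function.Injective Φ := by
    intro p q hpq
    have hfun := congrArg Subtype.val hpq
    have h1 : p.1 = q.1 := Equiv.ext fun x => by
      have := congrFun hfun x.1
      simpa [Φ, dif_pos x.2] using this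
    have h2 : p.2 = q.2 := by
      funext x
      have hx : x.1 ∉ X := Finset.mem_compl.mp x.2
      have := congrFun hfun x.1
      simpa [Φ, dif_neg hx] using this
    exact Prod.ext h1 h2
  have hle := Fintype.card_le_of_injective Φ hΦ
  have hcard1 : Fintype.card (((↑X : Type) ≃ Fin k) × ((↑(Xᶜ) : Type) → Fin k)) =
      k.factorial * k ^ (n - k) := by
    rw [Fintype.card_prod, Fintype.card_equiv (Fintype.equivFinOfCardEq hcardX),
      Fintype.card_fun]
    simp [hcardX, hcardXc]
  have hcard2 : Fintype.card {f : Fin n → Fin k // Set.InjOn f ↑X} =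
      (Finset.univ.filter (fun f : Fin n → Fin k => Set.InjOn f ↑X)).card :=
    Fintype.card_subtype _
  rw [hcard1, hcard2] at hle
  exact hle

/-- Greedy/averaging step: some function is injective on a `k!/k^k` fraction of `S`. -/
lemma cc_greedy (n k : ℕ) (hk : 1 ≤ k) (hkn : k ≤ n) (S : Finset (Finset (Fin n)))
    (hS : ∀ X ∈ S, X.card = k) :
    ∃ f : Fin n → Fin k,
      S.card * k.factorial ≤ (S.filter (fun X : Finset (Fin n) => Set.InjOn f ↑X)).card * k ^ k := by
  classical
  by_contra hcon
  push_neg at hcon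
  have hne : Nonempty (Fin n → Fin k) := ⟨fun _ => ⟨0, hk⟩⟩
  -- exchange the double sum
  have hsum : ∑ f : Fin n → Fin k, (S.filter (fun X : Finset (Fin n) => Set.InjOn f ↑X)).card
      = ∑ X ∈ S, (Finset.univ.filter (fun f : Fin n → Fin k => Set.InjOn f ↑X)).card := by
    simp_rw [Finset.card_filter]
    rw [Finset.sum_comm]
  have hlow : S.card * (k.factorial * k ^ (n - k)) ≤
      ∑ f : Fin n → Fin k, (S.filter (fun X : Finset (Fin n) => Set.InjOn f ↑X)).card := by
    rw [hsum]
    calc S.card * (k.factorial * k ^ (n - k))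
        = ∑ _X ∈ S, k.factorial * k ^ (n - k) := by rw [Finset.sum_const, smul_eq_mul]
      _ ≤ _ := Finset.sum_le_sum fun X hX => cc_count n k X (hS X hX)
  have hhigh : ∑ f : Fin n → Fin k, (S.filter (fun X : Finset (Fin n) => Set.InjOn f ↑X)).card * k ^ k
      < ∑ _f : Fin n → Fin k, S.card * k.factorial :=
    Finset.sum_lt_sum_of_nonempty Finset.univ_nonempty fun f _ => hcon f
  rw [← Finset.sum_mul, Finset.sum_const, Finset.card_univ, Fintype.card_fun,
    Fintype.card_fin, Fintype.card_fin, smul_eq_mul] at hhigh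
  have hstep : S.card * (k.factorial * k ^ (n - k)) * k ^ k < k ^ n * (S.card * k.factorial) :=
    lt_of_le_of_lt (Nat.mul_le_mul_right _ hlow) hhigh
  have hpow : k ^ (n - k) * k ^ k = k ^ n := by
    rw [← pow_add]
    congr 1
    omega
  have heq : S.card * (k.factorial * k ^ (n - k)) * k ^ k = k ^ n * (S.card * k.factorial) := by
    rw [← hpow]; ring
  rw [heq] at hstep
  exact lt_irrefl _ hstep

/-- Main greedy induction. -/
lemma cc_main (n k : ℕ) (hk : 1 ≤ k) (hkn : k ≤ n) :
    ∀ t : ℕ, ∀ S : Finset (Finset (Fin n)), (∀ X ∈ S, X.card = k) →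
      (S.card : ℝ) * (1 - (k.factorial : ℝ) / (k : ℝ) ^ k) ^ t ≤ 1 →
      ∃ Λ : Finset (Fin n → Fin k), Λ.card ≤ t + 1 ∧
        ∀ X ∈ S, ∃ h ∈ Λ, Set.InjOn h ↑X := by
  classical
  have hkpos : (0 : ℝ) < (k : ℝ) ^ k := by positivity
  have hq0 : (0 : ℝ) ≤ (k.factorial : ℝ) / (k : ℝ) ^ k := by positivity
  have hq1 : (k.factorial : ℝ) / (k : ℝ) ^ k ≤ 1 := by
    rw [div_le_one hkpos]
    exact_mod_cast Nat.factorial_le_pow k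
  set q : ℝ := (k.factorial : ℝ) / (k : ℝ) ^ k with hq
  intro t
  induction t with
  | zero =>
    intro S hS hb
    rw [pow_zero, mul_one] at hb
    have hb' : S.card ≤ 1 := by exact_mod_cast hb
    rcases Finset.eq_empty_or_nonempty S with hE | hNE
    · exact ⟨∅, by simp, by simp [hE]⟩
    · have h1 : S.card = 1 := le_antisymm hb' hNE.card_pos
      obtain ⟨X, hX⟩ := Finset.card_eq_one.mp h1
      have hXk : X.card = k := hS X (by simp [hX])
      have hpos : 0 < (Finset.univ.filter
          (fun f : Fin n → Fin k => Set.InjOn f ↑X)).card :=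
        lt_of_lt_of_le (by positivity) (cc_count n k X hXk)
      obtain ⟨f, hf⟩ := Finset.card_pos.mp hpos
      refine ⟨{f}, by simp, ?_⟩
      intro Y hY
      rw [hX, Finset.mem_singleton] at hY
      subst hY
      exact ⟨f, Finset.mem_singleton_self f, (Finset.mem_filter.mp hf).2⟩
  | succ t ih =>
    intro S hS hb
    obtain ⟨f, hf⟩ := cc_greedy n k hk hkn S hS
    set S' := S.filter (fun X : Finset (Fin n) => ¬ Set.InjOn f ↑X) with hS'
    have hcnt : (S.filter (fun X : Finset (Fin n) => Set.InjOn f ↑X)).card + S'.card = S.card :=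
      Finset.card_filter_add_card_filter_not _
    have hcntle : q * S.card ≤ ((S.filter (fun X : Finset (Fin n) => Set.InjOn f ↑X)).card : ℝ) := by
      rw [hq, div_mul_eq_mul_div, div_le_iff₀ hkpos]
      calc (k.factorial : ℝ) * S.card = (S.card * k.factorial : ℕ) := by push_cast; ring
        _ ≤ ((S.filter (fun X : Finset (Fin n) => Set.InjOn f ↑X)).card * k ^ k : ℕ) := by exact_mod_cast hf
        _ = _ := by push_cast; ring
    have hS'le : (S'.card : ℝ) ≤ (1 - q) * S.card := by
      have : (S'.card : ℝ) = (S.card : ℝ) - (S.filter (fun X : Finset (Fin n) => Set.InjOn f ↑X)).card := by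
        have := hcnt
        push_cast [← this]
        ring
      rw [this]
      nlinarith
    have hb' : (S'.card : ℝ) * (1 - q) ^ t ≤ 1 := by
      have hpw : (0 : ℝ) ≤ (1 - q) ^ t := pow_nonneg (by linarith) t
      calc (S'.card : ℝ) * (1 - q) ^ t ≤ ((1 - q) * S.card) * (1 - q) ^ t :=
            mul_le_mul_of_nonneg_right hS'le hpw
        _ = (S.card : ℝ) * (1 - q) ^ (t + 1) := by ring
        _ ≤ 1 := hb
    obtain ⟨Λ', hΛ'card, hΛ'cov⟩ := ih S' (fun X hX => hS X (Finset.mem_filter.mp hX).1) hb'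
    refine ⟨insert f Λ', ?_, ?_⟩
    · calc (insert f Λ').card ≤ Λ'.card + 1 := Finset.card_insert_le _ _
        _ ≤ t + 1 + 1 := by omega
    · intro X hX
      by_cases hinj : Set.InjOn f ↑X
      · exact ⟨f, Finset.mem_insert_self _ _, hinj⟩
      · obtain ⟨h, hh, hhinj⟩ := hΛ'cov X (Finset.mem_filter.mpr ⟨hX, hinj⟩)
        exact ⟨h, Finset.mem_insert_of_mem hh, hhinj⟩

/-- color-coding, Alon–Yuster–Zwick.
For all `1 ≤ k ≤ n` there is a family `Λ` of functions from `Fin n` to `Fin k`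
with `|Λ| ≤ ⌈e^k · k · log n⌉ + 1` such that every `k`-element subset of `Fin n`
is mapped injectively by some member of `Λ`. -/
theorem color_coding (n k : ℕ) (hk : 1 ≤ k) (hkn : k ≤ n) :
    ∃ Λ : Finset (Fin n → Fin k),
      Λ.card ≤ ⌈Real.exp k * k * Real.log n⌉₊ + 1 ∧
      ∀ X : Finset (Fin n), X.card = k → ∃ h ∈ Λ, Set.InjOn h ↑X := by
  classical
  set T := ⌈Real.exp k * k * Real.log n⌉₊ with hT
  set q : ℝ := (k.factorial : ℝ) / (k : ℝ) ^ k with hq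
  have hkpos : (0 : ℝ) < (k : ℝ) ^ k := by positivity
  have hn1 : 1 ≤ n := le_trans hk hkn
  have hnpos : (0 : ℝ) < n := by exact_mod_cast hn1
  have hq0 : (0 : ℝ) ≤ q := by positivity
  have hq1 : q ≤ 1 := by
    rw [hq, div_le_one hkpos]
    exact_mod_cast Nat.factorial_le_pow k
  -- q ≥ exp(-k)
  have hqexp : Real.exp (-(k : ℝ)) ≤ q := by
    have h1 : (k : ℝ) ^ k / (k.factorial : ℝ) ≤ Real.exp k :=
      Real.pow_div_factorial_le_exp (x := (k:ℝ)) (Nat.cast_nonneg k) k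
    have hfacpos : (0 : ℝ) < (k.factorial : ℝ) := by exact_mod_cast k.factorial_pos
    rw [div_le_iff₀ hfacpos] at h1
    rw [Real.exp_neg, hq, inv_le_iff_one_le_mul₀ (Real.exp_pos _), div_mul_eq_mul_div,
      le_div_iff₀ hkpos, one_mul, mul_comm]
    exact h1
  -- the key analytic bound: choose * (1-q)^T ≤ 1
  have hkey : ((n.choose k : ℕ) : ℝ) * (1 - q) ^ T ≤ 1 := by
    have h1q : (0 : ℝ) ≤ 1 - q := by linarith
    have hle1 : (1 - q) ^ T ≤ Real.exp (-q) ^ T :=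
      pow_le_pow_left₀ h1q (Real.one_sub_le_exp_neg q) T
    have hle2 : Real.exp (-q) ^ T = Real.exp (-(q * T)) := by
      rw [← Real.exp_nat_mul]
      ring_nf
    have hTge : Real.exp k * k * Real.log n ≤ (T : ℝ) := Nat.le_ceil _
    have hlogn : 0 ≤ Real.log n := Real.log_nonneg (by exact_mod_cast hn1)
    have hqT : (k : ℝ) * Real.log n ≤ q * T := by
      calc (k : ℝ) * Real.log n
          = Real.exp (-(k : ℝ)) * (Real.exp k * k * Real.log n) := by
            rw [Real.exp_neg]
            field_simp
        _ ≤ Real.exp (-(k : ℝ)) * T := by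
            apply mul_le_mul_of_nonneg_left hTge (le_of_lt (Real.exp_pos _))
        _ ≤ q * T := by
            apply mul_le_mul_of_nonneg_right hqexp (by positivity)
    have hle3 : Real.exp (-(q * T)) ≤ Real.exp (-((k : ℝ) * Real.log n)) := by
      apply Real.exp_le_exp.mpr
      linarith
    have hle4 : Real.exp (-((k : ℝ) * Real.log n)) = ((n : ℝ) ^ k)⁻¹ := by
      rw [Real.exp_neg, mul_comm, Real.exp_mul, Real.exp_log hnpos, Real.rpow_natCast]
    have hchoose : ((n.choose k : ℕ) : ℝ) ≤ (n : ℝ) ^ k := by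
      exact_mod_cast Nat.choose_le_pow n k
    have hnk : (0 : ℝ) < (n : ℝ) ^ k := by positivity
    calc ((n.choose k : ℕ) : ℝ) * (1 - q) ^ T
        ≤ (n : ℝ) ^ k * ((n : ℝ) ^ k)⁻¹ := by
          apply mul_le_mul hchoose _ (by positivity) (le_of_lt hnk)
          rw [← hle4]
          exact le_trans hle1 (le_of_eq hle2 |>.trans hle3)
      _ = 1 := mul_inv_cancel₀ (ne_of_gt hnk)
  -- apply the greedy induction to all k-subsets
  obtain ⟨Λ, hΛcard, hΛcov⟩ := cc_main n k hk hkn T (Finset.univ.powersetCard k)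
    (fun X hX => (Finset.mem_powersetCard.mp hX).2)
    (by
      rw [Finset.card_powersetCard, Finset.card_univ, Fintype.card_fin]
      exact hkey)
  refine ⟨Λ, hΛcard, fun X hX => hΛcov X ?_⟩
  exact Finset.mem_powersetCard.mpr ⟨Finset.subset_univ X, hX⟩
end

section
/- Let H₁ be a finite bipartite graph with parts A₁ and B₁ (all edges between A₁ and B₁), let p, d be positive integers, let Λ_A be a family of functions from A₁ to [p] such that every p-element subset of A₁ is mapped injectively by some h ∈ Λ_A, and let Λ_B be a family of functions from B₁ to [d] such that every d-element subset of B₁ is mapped injectively by some h ∈ Λ_B. Define the bipartite graph H with parts A(H) = A₁ × Λ_A × Λ_B and B(H) = B₁ × Λ_A × Λ_B, where (u,h₁,h₂) is adjacent to (v,h₁',h₂') if and only if h₁ = h₁', h₂ = h₂', and u is adjacent to v in H₁; and define colorings α : A(H) → [p] by α(u,h₁,h₂) = h₁(u) and β : B(H) → [d] by β(v,h₁,h₂) = h₂(v). Then: (1) if some p-element subset of A₁ has at least d common neighbors in B₁, then there exist p vertices in A(H) with pairwise distinct α-colors having d common neighbors in B(H) with pairwise distinct β-colors; and (2) for every positive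 integer q and natural number m, if every q-element subset of A₁ has at most m common neighbors in B₁, then every q-element subset of A(H) has at most m common neighbors in B(H). -/
/-!
All the work happens inside one layer `α × {c}` of the product, which is a copy of the original
graph. For (1), choose `d` common neighbours `T` of `S`, a hash `l₁` injective on `S` and a hash
`l₂` injective on `T`, and copy `S` and `T` into the layer `(l₁, l₂)`. For (2), a set `S'` of
`q` vertices with a common neighbour lies in a single layer `c`, so it projects injectively to
`q` vertices of the original graph, and its common neighbours are exactly the copies in layer `c`
of the common neighbours of that projection.
-/

open Finset Function

section

variable {α β ι : Type*}

def commonNeighbors (E : α → β → Prop) (S : Finset α) : Set β := {v | ∀ u ∈ S, E u v}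

/-- The graph `H` of the theorem, with `ι = ΛA × ΛB`. -/
def layerAdj (E : α → β → Prop) (a : α × ι) (b : β × ι) : Prop := a.2 = b.2 ∧ E a.1 b.1

lemma exists_finset_subset_card_eq_of_le_ncard [Finite β] {s : Set β} {n : ℕ}
    (h : n ≤ s.ncard) : ∃ t : Finset β, ↑t ⊆ s ∧ t.card = n := by
  obtain ⟨t, hts, rfl⟩ := Set.exists_subset_card_eq h
  exact ⟨t.toFinite.toFinset, by simpa using hts, (Set.ncard_eq_toFinset_card t).symm⟩

lemma Set.InjOn.map_sectL {γ : Type*} {f : α × ι → γ} {c : ι} {S : Finset α}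
    (h : Set.InjOn (fun u => f (u, c)) ↑S) : Set.InjOn f ↑(S.map (Embedding.sectL α c)) := by
  rw [coe_map]
  exact h.image_of_comp

lemma card_image_fst_of_forall_snd_eq {S' : Finset (α × ι)} {c : ι} [DecidableEq α]
    (hS' : ∀ a ∈ S', a.2 = c) : (S'.image Prod.fst).card = S'.card :=
  card_image_of_injOn fun a ha b hb hab => Prod.ext hab ((hS' a ha).trans (hS' b hb).symm)

lemma commonNeighbors_layerAdj_eq_image {E : α → β → Prop} {S' : Finset (α × ι)} {c : ι}
    [DecidableEq α] (hne : S'.Nonempty) (hS' : ∀ a ∈ S', a.2 = c) :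
    commonNeighbors (layerAdj E) S' = (fun v => (v, c)) '' commonNeighbors E (S'.image Prod.fst) := by
  obtain ⟨a₀, ha₀⟩ := hne
  ext ⟨v, c'⟩
  simp only [commonNeighbors, layerAdj, Set.mem_ofPred_eq, Set.mem_image, Prod.mk.injEq,
    mem_image, forall_exists_index, and_imp, forall_apply_eq_imp_iff₂]
  constructor
  · intro h
    exact ⟨v, fun a ha => (h a ha).2, rfl, (hS' a₀ ha₀).symm.trans (h a₀ ha₀).1⟩
  · rintro ⟨_, h, rfl, rfl⟩ a ha
    exact ⟨hS' a ha, h a ha⟩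

lemma ncard_commonNeighbors_layerAdj_le {E : α → β → Prop} {q m : ℕ} (hq : 0 < q)
    (hm : ∀ S : Finset α, S.card = q → (commonNeighbors E S).ncard ≤ m)
    (S' : Finset (α × ι)) (hS' : S'.card = q) : (commonNeighbors (layerAdj E) S').ncard ≤ m := by
  classical
  rcases (commonNeighbors (layerAdj E) S').eq_empty_or_nonempty with hM | ⟨b₀, hb₀⟩
  · simp [hM]
  have hlayer : ∀ a ∈ S', a.2 = b₀.2 := fun a ha => (hb₀ a ha).1
  rw [commonNeighbors_layerAdj_eq_image (card_pos.mp (hS' ▸ hq)) hlayer,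
    Set.ncard_image_of_injective _ (Prod.mk_left_injective b₀.2)]
  exact hm _ ((card_image_fst_of_forall_snd_eq hlayer).trans hS')

end

theorem color_coding_product_general {α β ΛA ΛB : Type*}
    [Fintype β]
    (E : α → β → Prop) (p d : ℕ)
    (fA : ΛA → α → Fin p) (fB : ΛB → β → Fin d)
    (hA : ∀ X : Finset α, X.card = p → ∃ l : ΛA, Set.InjOn (fA l) ↑X)
    (hB : ∀ Y : Finset β, Y.card = d → ∃ l : ΛB, Set.InjOn (fB l) ↑Y) :
    ((∃ S : Finset α, S.card = p ∧ d ≤ {v : β | ∀ u ∈ S, E u v}.ncard) →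
      ∃ S' : Finset (α × ΛA × ΛB), S'.card = p ∧
        Set.InjOn (fun a : α × ΛA × ΛB => fA a.2.1 a.1) ↑S' ∧
        ∃ T' : Finset (β × ΛA × ΛB), T'.card = d ∧
          Set.InjOn (fun b : β × ΛA × ΛB => fB b.2.2 b.1) ↑T' ∧
          ∀ a ∈ S', ∀ b ∈ T',
            a.2.1 = b.2.1 ∧ a.2.2 = b.2.2 ∧ E a.1 b.1)
    ∧ (∀ q m : ℕ, 0 < q →
        (∀ S : Finset α, S.card = q → {v : β | ∀ u ∈ S, E u v}.ncard ≤ m) →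
        ∀ S' : Finset (α × ΛA × ΛB), S'.card = q →
          {b : β × ΛA × ΛB |
            ∀ a ∈ S', a.2.1 = b.2.1 ∧ a.2.2 = b.2.2 ∧ E a.1 b.1}.ncard ≤ m) := by
  refine ⟨?_, fun q m hq hm S' hS' => ?_⟩
  · rintro ⟨S, hS, hSd⟩
    obtain ⟨T, hTS, hT⟩ := exists_finset_subset_card_eq_of_le_ncard hSd
    obtain ⟨l₁, hl₁⟩ := hA S hS
    obtain ⟨l₂, hl₂⟩ := hB T hT
    refine ⟨S.map (Embedding.sectL α (l₁, l₂)), by rw [card_map, hS], hl₁.map_sectL,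
      T.map (Embedding.sectL β (l₁, l₂)), by rw [card_map, hT], hl₂.map_sectL, ?_⟩
    simp only [mem_map, Embedding.sectL_apply, forall_exists_index, and_imp]
    rintro _ u hu rfl _ v hv rfl
    exact ⟨rfl, rfl, hTS hv u hu⟩
  · simpa only [commonNeighbors, layerAdj, Prod.ext_iff, and_assoc] using
      ncard_commonNeighbors_layerAdj_le hq hm S' hS'

/-- color-coding product construction, Theorem 4.1.
Given a bipartite graph with parts `α`, `β` and edge relation `E`, and perfect
hash families `ΛA` (functions `α → Fin p`, indexed by `fA`) and `ΛB`
(functions `β → Fin d`, indexed by `fB`), form the bipartite graph `H` with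
parts `α × ΛA × ΛB` and `β × ΛA × ΛB`, where `(u, h₁, h₂)` is adjacent to
`(v, h₁', h₂')` iff `h₁ = h₁'`, `h₂ = h₂'` and `E u v`, colored by
`α(u,h₁,h₂) = fA h₁ u` and `β(v,h₁,h₂) = fB h₂ v`.  Then:
(1) if some `p`-element subset of `α` has at least `d` common neighbors, then
there are `p` vertices of pairwise distinct `α`-colors in `A(H)` having `d`
common neighbors of pairwise distinct `β`-colors in `B(H)`; and
(2) if every `q`-element subset of `α` has at most `m` common neighbors, then
every `q`-element subset of `A(H)` has at most `m` common neighbors. -/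
theorem color_coding_product {α β ΛA ΛB : Type*}
    [Fintype α] [Fintype β] [Fintype ΛA] [Fintype ΛB]
    (E : α → β → Prop) (p d : ℕ) (hp : 0 < p) (hd : 0 < d)
    (fA : ΛA → α → Fin p) (fB : ΛB → β → Fin d)
    (hA : ∀ X : Finset α, X.card = p → ∃ l : ΛA, Set.InjOn (fA l) ↑X)
    (hB : ∀ Y : Finset β, Y.card = d → ∃ l : ΛB, Set.InjOn (fB l) ↑Y) :
    ((∃ S : Finset α, S.card = p ∧ d ≤ {v : β | ∀ u ∈ S, E u v}.ncard) →
      ∃ S' : Finset (α × ΛA × ΛB), S'.card = p ∧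
        Set.InjOn (fun a : α × ΛA × ΛB => fA a.2.1 a.1) ↑S' ∧
        ∃ T' : Finset (β × ΛA × ΛB), T'.card = d ∧
          Set.InjOn (fun b : β × ΛA × ΛB => fB b.2.2 b.1) ↑T' ∧
          ∀ a ∈ S', ∀ b ∈ T',
            a.2.1 = b.2.1 ∧ a.2.2 = b.2.2 ∧ E a.1 b.1)
    ∧ (∀ q m : ℕ, 0 < q →
        (∀ S : Finset α, S.card = q → {v : β | ∀ u ∈ S, E u v}.ncard ≤ m) →
        ∀ S' : Finset (α × ΛA × ΛB), S'.card = q →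
          {b : β × ΛA × ΛB |
            ∀ a ∈ S', a.2.1 = b.2.1 ∧ a.2.2 = b.2.2 ∧ E a.1 b.1}.ncard ≤ m) :=
  color_coding_product_general E p d fA fB hA hB
end

section
/- With the graph G' constructed from a bipartite graph H = (A ⊔ B, E) with colorings α : A → [s], β : B → [d] and parameter t as in the context, for every dominating set D of G' and every c ∈ [d], D has nonempty intersection with B_c := {b ∈ B : β(b) = c} ∪ {x_c, y_c}. -/
/-- A set `D` of vertices dominates a graph `G`: every vertex is in `D` or
adjacent to a vertex of `D`. -/
def IsDominatingSet {V : Type*} (G : SimpleGraph V) (D : Set V) : Prop :=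
  ∀ v : V, v ∈ D ∨ ∃ u ∈ D, G.Adj u v

/-- The vertex set of the graph `G'`: the disjoint union of `B`,
`{x_c : c ∈ [d]}`, `{y_c : c ∈ [d]}`, `C = A × [t]` and
`W = {w_{b,j,i} : b ∈ B, j ∈ [s], i ∈ [t]}`. -/
abbrev GPVertex (A B : Type*) (s d t : ℕ) : Type _ :=
  (B ⊕ (Fin d ⊕ Fin d)) ⊕ ((A × Fin t) ⊕ (B × Fin s × Fin t))

/-- The defining relation for the edges of `G'` (to be symmetrized):
(E1) distinct `b, b' ∈ B` with `β b = β b'` are adjacent;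
(E2) `x_c` and `y_c` are adjacent to every `b ∈ B` with `β b = c`;
(E3) `w_{b,j,i}` is adjacent to every `b' ∈ B` with `b' ≠ b` and `β b' = β b`;
(E4) `(a, i)` is adjacent to `w_{b,j,i}` whenever `E a b` and `α a = j`;
(E5) distinct `(a, i), (a', i)` with the same `i` are adjacent. -/
def gpRel {A B : Type*} (s d t : ℕ) (α : A → Fin s) (β : B → Fin d)
    (E : A → B → Prop) :
    GPVertex A B s d t → GPVertex A B s d t → Prop
  | Sum.inl (Sum.inl b), Sum.inl (Sum.inl b') => b ≠ b' ∧ β b = β b'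
  | Sum.inl (Sum.inr (Sum.inl c)), Sum.inl (Sum.inl b) => β b = c
  | Sum.inl (Sum.inr (Sum.inr c)), Sum.inl (Sum.inl b) => β b = c
  | Sum.inr (Sum.inr (b, _, _)), Sum.inl (Sum.inl b') => b' ≠ b ∧ β b' = β b
  | Sum.inr (Sum.inl (a, i)), Sum.inr (Sum.inr (b, j, i')) =>
      i = i' ∧ E a b ∧ α a = j
  | Sum.inr (Sum.inl (a, i)), Sum.inr (Sum.inl (a', i')) => a ≠ a' ∧ i = i'
  | _, _ => False

/-- The graph `G'` built from the bipartite graph `(A ⊔ B, E)` with colorings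
`α : A → [s]`, `β : B → [d]` and parameter `t`. -/
def GP {A B : Type*} (s d t : ℕ) (α : A → Fin s) (β : B → Fin d)
    (E : A → B → Prop) : SimpleGraph (GPVertex A B s d t) :=
  SimpleGraph.fromRel (gpRel s d t α β E)

/-- Claim 1.
Every dominating set `D` of `G'` meets `B_c = {b ∈ B : β b = c} ∪ {x_c, y_c}`
for every color `c ∈ [d]`. -/
theorem dominating_set_meets_Bc {A B : Type*} [Fintype A] [Fintype B]
    (s d t : ℕ) (hs : 0 < s) (hd : 0 < d) (ht : 0 < t)
    (α : A → Fin s) (β : B → Fin d) (E : A → B → Prop)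
    (D : Set (GPVertex A B s d t))
    (hD : IsDominatingSet (GP s d t α β E) D) (c : Fin d) :
    ∃ v ∈ D,
      (∃ b : B, β b = c ∧ v = Sum.inl (Sum.inl b)) ∨
      v = Sum.inl (Sum.inr (Sum.inl c)) ∨
      v = Sum.inl (Sum.inr (Sum.inr c)) := by
  rcases hD (Sum.inl (Sum.inr (Sum.inl c))) with h | ⟨u, hu, hadj⟩
  · exact ⟨_, h, Or.inr (Or.inl rfl)⟩
  · obtain ⟨hne, hrel⟩ := hadj
    rcases u with (b | c' | c') | (⟨a, i⟩ | ⟨b, j, i⟩) <;>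
      simp only [gpRel] at hrel <;>
      first
      | exact ⟨_, hu, Or.inl ⟨b, by tauto, rfl⟩⟩
      | tauto
end

section
/- With the graph G' constructed from a bipartite graph H = (A ⊔ B, E) with colorings α : A → [s], β : B → [d] and parameter t as in the context, suppose there exist S ⊆ A and T ⊆ B such that |S| = s, |T| = d, α restricted to S is a bijection onto [s], β restricted to T is a bijection onto [d], and every vertex of S is adjacent in H to every vertex of T. Then T ∪ (S × [t]) is a dominating set of G', and hence G' has a dominating set of size at most d + s·t. -/
/-- Claim 2, completeness.
If `S ⊆ A` with `|S| = s` and `T ⊆ B` with `|T| = d` are such that `α` is a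
bijection from `S` onto `[s]`, `β` is a bijection from `T` onto `[d]`, and
every vertex of `S` is adjacent in `H` to every vertex of `T`, then
`T ∪ (S × [t])` is a dominating set of `G'`; hence `G'` has a dominating set
of size at most `d + s·t`. -/
theorem completeness_Gprime {A B : Type*} [Fintype A] [Fintype B]
    (s d t : ℕ) (hs : 0 < s) (hd : 0 < d) (ht : 0 < t)
    (α : A → Fin s) (β : B → Fin d) (E : A → B → Prop)
    (S : Finset A) (T : Finset B) (hS : S.card = s) (hT : T.card = d)
    (hα : Set.BijOn α ↑S (Set.univ : Set (Fin s)))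
    (hβ : Set.BijOn β ↑T (Set.univ : Set (Fin d)))
    (hST : ∀ a ∈ S, ∀ b ∈ T, E a b) :
    IsDominatingSet (GP s d t α β E)
      {v : GPVertex A B s d t |
        (∃ b ∈ T, v = Sum.inl (Sum.inl b)) ∨
        (∃ a ∈ S, ∃ i : Fin t, v = Sum.inr (Sum.inl (a, i)))} ∧
    ∃ D : Set (GPVertex A B s d t),
      IsDominatingSet (GP s d t α β E) D ∧ D.ncard ≤ d + s * t := by
  have hSne : S.Nonempty := Finset.card_pos.mp (by omega)
  have hdom : IsDominatingSet (GP s d t α β E)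
      {v : GPVertex A B s d t |
        (∃ b ∈ T, v = Sum.inl (Sum.inl b)) ∨
        (∃ a ∈ S, ∃ i : Fin t, v = Sum.inr (Sum.inl (a, i)))} := by
    intro v
    match v with
    | Sum.inl (Sum.inl b) =>
      by_cases hb : b ∈ T
      · exact Or.inl (Or.inl ⟨b, hb, rfl⟩)
      · obtain ⟨b', hb', hβb'⟩ := hβ.surjOn (Set.mem_univ (β b))
        refine Or.inr ⟨Sum.inl (Sum.inl b'), Or.inl ⟨b', hb', rfl⟩, ?_⟩
        have hne : b' ≠ b := fun h => hb (h ▸ hb')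
        rw [GP, SimpleGraph.fromRel_adj]
        exact ⟨by simpa using hne, Or.inl ⟨hne, hβb'⟩⟩
    | Sum.inl (Sum.inr (Sum.inl c)) =>
      obtain ⟨b, hb, hβb⟩ := hβ.surjOn (Set.mem_univ c)
      refine Or.inr ⟨Sum.inl (Sum.inl b), Or.inl ⟨b, hb, rfl⟩, ?_⟩
      rw [GP, SimpleGraph.fromRel_adj]
      exact ⟨by simp, Or.inr hβb⟩
    | Sum.inl (Sum.inr (Sum.inr c)) =>
      obtain ⟨b, hb, hβb⟩ := hβ.surjOn (Set.mem_univ c)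
      refine Or.inr ⟨Sum.inl (Sum.inl b), Or.inl ⟨b, hb, rfl⟩, ?_⟩
      rw [GP, SimpleGraph.fromRel_adj]
      exact ⟨by simp, Or.inr hβb⟩
    | Sum.inr (Sum.inl (a, i)) =>
      by_cases ha : a ∈ S
      · exact Or.inl (Or.inr ⟨a, ha, i, rfl⟩)
      · obtain ⟨a', ha'⟩ := hSne
        refine Or.inr ⟨Sum.inr (Sum.inl (a', i)), Or.inr ⟨a', ha', i, rfl⟩, ?_⟩
        have hne : a' ≠ a := fun h => ha (h ▸ ha')
        rw [GP, SimpleGraph.fromRel_adj]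
        exact ⟨by simp [hne], Or.inl ⟨hne, rfl⟩⟩
    | Sum.inr (Sum.inr (b, j, i)) =>
      by_cases hb : b ∈ T
      · obtain ⟨a, ha, hαa⟩ := hα.surjOn (Set.mem_univ j)
        refine Or.inr ⟨Sum.inr (Sum.inl (a, i)), Or.inr ⟨a, ha, i, rfl⟩, ?_⟩
        rw [GP, SimpleGraph.fromRel_adj]
        exact ⟨by simp, Or.inl ⟨rfl, hST a ha b hb, hαa⟩⟩
      · obtain ⟨b', hb', hβb'⟩ := hβ.surjOn (Set.mem_univ (β b))
        refine Or.inr ⟨Sum.inl (Sum.inl b'), Or.inl ⟨b', hb', rfl⟩, ?_⟩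
        have hne : b' ≠ b := fun h => hb (h ▸ hb')
        rw [GP, SimpleGraph.fromRel_adj]
        exact ⟨by simp, Or.inr ⟨hne, hβb'⟩⟩
  refine ⟨hdom, _, hdom, ?_⟩
  have heq : {v : GPVertex A B s d t |
        (∃ b ∈ T, v = Sum.inl (Sum.inl b)) ∨
        (∃ a ∈ S, ∃ i : Fin t, v = Sum.inr (Sum.inl (a, i)))}
      = ((fun b => Sum.inl (Sum.inl b)) '' (↑T : Set B)) ∪
        ((fun p : A × Fin t => Sum.inr (Sum.inl p)) ''
          ↑(S ×ˢ (Finset.univ : Finset (Fin t)))) := by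
    ext v
    simp only [Set.mem_setOf_eq, Set.mem_union, Set.mem_image, Finset.coe_mem,
      Finset.mem_coe, Finset.mem_product, Finset.mem_univ, and_true, Prod.exists]
    constructor
    · rintro (⟨b, hb, rfl⟩ | ⟨a, ha, i, rfl⟩)
      · exact Or.inl ⟨b, hb, rfl⟩
      · exact Or.inr ⟨a, i, ha, rfl⟩
    · rintro (⟨b, hb, rfl⟩ | ⟨a, i, ha, rfl⟩)
      · exact Or.inl ⟨b, hb, rfl⟩
      · exact Or.inr ⟨a, ha, i, rfl⟩
  rw [heq]
  calc _ ≤ ((fun b => Sum.inl (Sum.inl b)) '' (↑T : Set B)).ncard +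
        ((fun p : A × Fin t => Sum.inr (Sum.inl p)) ''
          ↑(S ×ˢ (Finset.univ : Finset (Fin t)))).ncard := Set.ncard_union_le _ _
    _ ≤ (↑T : Set B).ncard + (↑(S ×ˢ (Finset.univ : Finset (Fin t))) :
          Set (A × Fin t)).ncard :=
        Nat.add_le_add (Set.ncard_image_le (Set.toFinite _)) (Set.ncard_image_le (Set.toFinite _))
    _ ≤ d + s * t := by
        rw [Set.ncard_coe_finset, Set.ncard_coe_finset, hT, Finset.card_product,
          Finset.card_univ, Fintype.card_fin, hS]
end

section
/- With the graph G' constructed from a bipartite graph H = (A ⊔ B, E) with colorings α : A → [s], β : B → [d] and parameter t as in the context, let δ be a real number with 0 < δ < 1/2 and let m be a real number with 0 ≤ m < 2δ·√d − 1. Assume (1/2 − δ)·d/t ≤ d^{1/(2s)} and assume that every s-element subset of A has at most m common neighbors in B. Then every dominating set of G' has size strictly greater than (3/2 − δ)·d. -/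
set_option maxHeartbeats 1600000 in
/-- Claim 4, soundness.
Let `0 < δ < 1/2` and `0 ≤ m < 2δ√d − 1`.  Assume `(1/2 − δ)·d/t ≤ d^{1/(2s)}`
and that every `s`-element subset of `A` has at most `m` common neighbors in
`B`.  Then every dominating set of `G'` has size `> (3/2 − δ)·d`. -/
theorem soundness_Gprime {A B : Type*} [Fintype A] [Fintype B]
    (s d t : ℕ) (hs : 0 < s) (hd : 0 < d) (ht : 0 < t)
    (α : A → Fin s) (β : B → Fin d) (E : A → B → Prop)
    (δ m : ℝ) (hδ0 : 0 < δ) (hδ : δ < 1 / 2)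
    (hm0 : 0 ≤ m) (hm : m < 2 * δ * Real.sqrt d - 1)
    (hdt : (1 / 2 - δ) * d / t ≤ (d : ℝ) ^ ((1 : ℝ) / (2 * s)))
    (hcommon : ∀ S : Finset A, S.card = s →
      ({v : B | ∀ u ∈ S, E u v}.ncard : ℝ) ≤ m)
    (D : Set (GPVertex A B s d t))
    (hD : IsDominatingSet (GP s d t α β E) D) :
    (3 / 2 - δ) * d < (D.ncard : ℝ) := by
  classical
  by_contra hcon
  push_neg at hcon
  set Dc : Fin d → Finset B :=
    fun c => Finset.univ.filter (fun b => β b = c ∧ Sum.inl (Sum.inl b) ∈ D) with hDcdef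
  set P : Fin t → Finset A :=
    fun i => Finset.univ.filter (fun a => Sum.inr (Sum.inl (a, i)) ∈ D) with hPdef
  set Q : Fin t → Finset (B × Fin s) :=
    fun i => Finset.univ.filter
      (fun p => Sum.inr (Sum.inr (p.1, p.2, i)) ∈ D) with hQdef
  set K : Finset (Fin d) :=
    Finset.univ.filter (fun c => (Dc c).card ≠ 1) with hKdef
  -- domination of x_c and y_c
  have hXY : ∀ c : Fin d, Dc c = ∅ →
      (Sum.inl (Sum.inr (Sum.inl c)) : GPVertex A B s d t) ∈ D ∧
      (Sum.inl (Sum.inr (Sum.inr c)) : GPVertex A B s d t) ∈ D := by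
    intro c hc
    constructor
    · rcases hD (Sum.inl (Sum.inr (Sum.inl c))) with h | ⟨u, hu, hadj⟩
      · exact h
      · exfalso
        rw [GP, SimpleGraph.fromRel_adj] at hadj
        obtain ⟨hne, h | h⟩ := hadj
        · rcases u with (b | (c'|c')) | (⟨a,i⟩ | ⟨b,j,i⟩) <;> simp [gpRel] at h
        · rcases u with (b | (c'|c')) | (⟨a,i⟩ | ⟨b,j,i⟩) <;> simp [gpRel] at h
          have hmm : b ∈ Dc c := by
            rw [hDcdef]; simp only [Finset.mem_filter, Finset.mem_univ, true_and]
            exact ⟨h, hu⟩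
          rw [hc] at hmm
          exact absurd hmm (Finset.notMem_empty b)
    · rcases hD (Sum.inl (Sum.inr (Sum.inr c))) with h | ⟨u, hu, hadj⟩
      · exact h
      · exfalso
        rw [GP, SimpleGraph.fromRel_adj] at hadj
        obtain ⟨hne, h | h⟩ := hadj
        · rcases u with (b | (c'|c')) | (⟨a,i⟩ | ⟨b,j,i⟩) <;> simp [gpRel] at h
        · rcases u with (b | (c'|c')) | (⟨a,i⟩ | ⟨b,j,i⟩) <;> simp [gpRel] at h
          have hmm : b ∈ Dc c := by
            rw [hDcdef]; simp only [Finset.mem_filter, Finset.mem_univ, true_and]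
            exact ⟨h, hu⟩
          rw [hc] at hmm
          exact absurd hmm (Finset.notMem_empty b)
  -- domination of w_{b,j,i} for bad b
  have hW : ∀ (b : B) (j : Fin s) (i : Fin t), Dc (β b) ⊆ {b} →
      (b, j) ∈ Q i ∨ ∃ a ∈ P i, α a = j ∧ E a b := by
    intro b j i hb
    rcases hD (Sum.inr (Sum.inr (b, j, i))) with h | ⟨u, hu, hadj⟩
    · left
      rw [hQdef]; simp only [Finset.mem_filter, Finset.mem_univ, true_and]
      exact h
    · rw [GP, SimpleGraph.fromRel_adj] at hadj
      obtain ⟨hne, h | h⟩ := hadj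
      · rcases u with (b' | (c'|c')) | (⟨a,i'⟩ | ⟨b',j',i''⟩) <;> simp [gpRel] at h
        obtain ⟨hi, hE, hα⟩ := h
        right
        refine ⟨a, ?_, hα, hE⟩
        subst hi
        rw [hPdef]; simp only [Finset.mem_filter, Finset.mem_univ, true_and]
        exact hu
      · rcases u with (b' | (c'|c')) | (⟨a,i'⟩ | ⟨b',j',i''⟩) <;> simp [gpRel] at h
        exfalso
        have hmem : b' ∈ Dc (β b) := by
          rw [hDcdef]; simp only [Finset.mem_filter, Finset.mem_univ, true_and]
          exact ⟨h.2, hu⟩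
        have h2 := hb hmem
        rw [Finset.mem_singleton] at h2
        exact h.1 h2
  -- counting lower bound
  have hDn : D.ncard = (Finset.univ.filter (fun v : GPVertex A B s d t => v ∈ D)).card := by
    rw [← Set.ncard_coe_finset]
    congr 1
    ext v; simp
  have e1 : (Finset.univ.filter (fun v : GPVertex A B s d t => v ∈ D)).card
      = ((∑ b : B, (if (Sum.inl (Sum.inl b) : GPVertex A B s d t) ∈ D then 1 else 0))
        + ((∑ c : Fin d, (if (Sum.inl (Sum.inr (Sum.inl c)) : GPVertex A B s d t) ∈ D then 1 else 0))
          + (∑ c : Fin d, (if (Sum.inl (Sum.inr (Sum.inr c)) : GPVertex A B s d t) ∈ D then 1 else 0))))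
       + ((∑ a : A, ∑ i : Fin t, (if (Sum.inr (Sum.inl (a, i)) : GPVertex A B s d t) ∈ D then 1 else 0))
        + (∑ b : B, ∑ j : Fin s, ∑ i : Fin t,
            (if (Sum.inr (Sum.inr (b, j, i)) : GPVertex A B s d t) ∈ D then 1 else 0))) := by
    rw [Finset.card_filter]
    simp only [Fintype.sum_sum_type, Fintype.sum_prod_type]
  have hB : ∑ b : B, (if (Sum.inl (Sum.inl b) : GPVertex A B s d t) ∈ D then 1 else 0)
      = ∑ c : Fin d, (Dc c).card := by
    rw [← Finset.sum_fiberwise Finset.univ β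
      (fun b => if (Sum.inl (Sum.inl b) : GPVertex A B s d t) ∈ D then 1 else 0)]
    refine Finset.sum_congr rfl fun c _ => ?_
    rw [hDcdef]
    simp only [Finset.card_filter, Finset.sum_filter]
    refine Finset.sum_congr rfl fun b _ => ?_
    by_cases h1 : β b = c <;> by_cases h2 : (Sum.inl (Sum.inl b) : GPVertex A B s d t) ∈ D <;>
      simp [h1, h2]
  have hC : ∑ a : A, ∑ i : Fin t,
      (if (Sum.inr (Sum.inl (a, i)) : GPVertex A B s d t) ∈ D then 1 else 0)
      = ∑ i : Fin t, (P i).card := by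
    rw [Finset.sum_comm]
    refine Finset.sum_congr rfl fun i _ => ?_
    simp only [hPdef, Finset.card_filter]
  have hWc : ∑ b : B, ∑ j : Fin s, ∑ i : Fin t,
      (if (Sum.inr (Sum.inr (b, j, i)) : GPVertex A B s d t) ∈ D then 1 else 0)
      = ∑ i : Fin t, (Q i).card := by
    have h1 : ∀ b : B, ∑ j : Fin s, ∑ i : Fin t,
        (if (Sum.inr (Sum.inr (b, j, i)) : GPVertex A B s d t) ∈ D then 1 else 0)
        = ∑ i : Fin t, ∑ j : Fin s,
        (if (Sum.inr (Sum.inr (b, j, i)) : GPVertex A B s d t) ∈ D then 1 else 0) :=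
      fun b => Finset.sum_comm
    simp only [h1]
    rw [Finset.sum_comm]
    refine Finset.sum_congr rfl fun i _ => ?_
    simp only [hQdef, Finset.card_filter, Fintype.sum_prod_type]
  have hcolor : ∀ c : Fin d, 1 + (if c ∈ K then 1 else 0) ≤ (Dc c).card
      + ((if (Sum.inl (Sum.inr (Sum.inl c)) : GPVertex A B s d t) ∈ D then 1 else 0)
        + (if (Sum.inl (Sum.inr (Sum.inr c)) : GPVertex A B s d t) ∈ D then 1 else 0)) := by
    intro c
    rcases Nat.lt_trichotomy (Dc c).card 1 with h | h | h
    · have h0 : Dc c = ∅ := Finset.card_eq_zero.mp (by omega)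
      obtain ⟨hx, hy⟩ := hXY c h0
      have hcK : c ∈ K := by
        rw [hKdef]; simp only [Finset.mem_filter, Finset.mem_univ, true_and]
        omega
      rw [if_pos hcK, if_pos hx, if_pos hy]
      omega
    · have hcK : c ∉ K := by
        rw [hKdef]; simp only [Finset.mem_filter, Finset.mem_univ, true_and]
        omega
      rw [if_neg hcK]
      omega
    · have hle : (if c ∈ K then 1 else 0) ≤ 1 := by split <;> omega
      omega
  have hKsum : ∑ c : Fin d, (if c ∈ K then 1 else 0) = K.card := by
    rw [Finset.sum_ite_mem, Finset.univ_inter, Finset.sum_const, smul_eq_mul, mul_one]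
  have hcard : d + K.card + ∑ i : Fin t, ((P i).card + (Q i).card) ≤ D.ncard := by
    rw [hDn, e1, hB, hC, hWc, Finset.sum_add_distrib]
    have hsum : d + K.card ≤ ∑ c : Fin d, ((Dc c).card
        + ((if (Sum.inl (Sum.inr (Sum.inl c)) : GPVertex A B s d t) ∈ D then 1 else 0)
          + (if (Sum.inl (Sum.inr (Sum.inr c)) : GPVertex A B s d t) ∈ D then 1 else 0))) := by
      calc d + K.card = ∑ c : Fin d, (1 + if c ∈ K then 1 else 0) := by
            rw [Finset.sum_add_distrib, hKsum, Finset.sum_const, Finset.card_univ,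
              Fintype.card_fin, smul_eq_mul, mul_one]
        _ ≤ _ := Finset.sum_le_sum fun c _ => hcolor c
    rw [Finset.sum_add_distrib, Finset.sum_add_distrib] at hsum
    omega
  -- pass to the reals
  set rr : ℕ := ∑ i : Fin t, ((P i).card + (Q i).card) with hrrdef
  have hd1 : (1:ℝ) ≤ d := by exact_mod_cast hd
  have hd0 : (0:ℝ) < d := by linarith
  have hKr : (K.card : ℝ) + (rr : ℝ) ≤ (1/2 - δ) * d := by
    have h1 : ((d + K.card + rr : ℕ) : ℝ) ≤ (D.ncard : ℝ) := by exact_mod_cast hcard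
    push_cast at h1
    linarith
  -- choose a light layer i₀
  obtain ⟨i₀, -, hmin⟩ := Finset.exists_min_image Finset.univ
    (fun i => (P i).card + (Q i).card) ⟨⟨0, ht⟩, Finset.mem_univ _⟩
  have htmin : t * ((P i₀).card + (Q i₀).card) ≤ rr := by
    rw [hrrdef]
    calc t * ((P i₀).card + (Q i₀).card)
        = ∑ _i : Fin t, ((P i₀).card + (Q i₀).card) := by
          rw [Finset.sum_const, Finset.card_univ, Fintype.card_fin, smul_eq_mul]
      _ ≤ _ := Finset.sum_le_sum fun i _ => hmin i (Finset.mem_univ i)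
  have hρ : ((P i₀).card : ℝ) + ((Q i₀).card : ℝ) ≤ (d:ℝ) ^ ((1:ℝ)/(2*(s:ℝ))) := by
    have ht' : (0:ℝ) < t := by exact_mod_cast ht
    have h2 : (t:ℝ) * (((P i₀).card : ℝ) + ((Q i₀).card : ℝ)) ≤ (1/2 - δ) * d := by
      have h3 : ((t * ((P i₀).card + (Q i₀).card) : ℕ) : ℝ) ≤ (rr : ℝ) := by
        exact_mod_cast htmin
      push_cast at h3
      have hK0 : (0:ℝ) ≤ K.card := Nat.cast_nonneg _
      linarith
    calc ((P i₀).card : ℝ) + ((Q i₀).card : ℝ) ≤ (1/2 - δ) * d / t := by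
          rw [le_div_iff₀ ht']
          linarith
      _ ≤ _ := hdt
  -- bad vertices
  set Bad : Finset B := Finset.univ.filter (fun b => Dc (β b) ⊆ {b}) with hBaddef
  have hdK : d ≤ K.card + Bad.card := by
    have hsurj : Set.SurjOn β ↑Bad
        ↑(Finset.univ.filter (fun c => (Dc c).card = 1)) := by
      intro c hc
      simp only [Finset.coe_filter, Set.mem_setOf_eq, Finset.mem_univ, true_and] at hc
      obtain ⟨b, hb⟩ := Finset.card_eq_one.mp hc
      have hbmem : b ∈ Dc c := by rw [hb]; exact Finset.mem_singleton_self b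
      have hβ : β b = c := by
        rw [hDcdef] at hbmem
        simp only [Finset.mem_filter] at hbmem
        exact hbmem.2.1
      refine ⟨b, ?_, hβ⟩
      simp only [hBaddef, Finset.coe_filter, Set.mem_setOf_eq, Finset.mem_univ, true_and]
      rw [hβ, hb]
    have h1 := Finset.card_le_card_of_surjOn β hsurj
    have h2 := Finset.card_filter_add_card_filter_not
      (s := (Finset.univ : Finset (Fin d))) (fun c => (Dc c).card = 1)
    rw [Finset.card_univ, Fintype.card_fin] at h2
    have hKeq : (Finset.univ.filter (fun c => ¬ (Dc c).card = 1)).card = K.card := by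
      rw [hKdef]
    omega
  -- bad vertices are covered by layer i₀
  set R : Finset B := Finset.univ.filter
    (fun b => ∀ j : Fin s, ∃ a ∈ P i₀, α a = j ∧ E a b) with hRdef
  have hBadsub : Bad ⊆ (Q i₀).image Prod.fst ∪ R := by
    intro b hbBad
    have hbBad' : Dc (β b) ⊆ {b} := by
      rw [hBaddef] at hbBad
      simp only [Finset.mem_filter, Finset.mem_univ, true_and] at hbBad
      exact hbBad
    by_cases hq : b ∈ (Q i₀).image Prod.fst
    · exact Finset.mem_union_left _ hq
    · refine Finset.mem_union_right _ ?_
      rw [hRdef]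
      simp only [Finset.mem_filter, Finset.mem_univ, true_and]
      intro j
      rcases hW b j i₀ hbBad' with hq' | ⟨a, ha, h1, h2⟩
      · exact absurd (Finset.mem_image.mpr ⟨(b,j), hq', rfl⟩) hq
      · exact ⟨a, ha, h1, h2⟩
  -- bound on R via common neighbours
  have hRsub : R ⊆ ((P i₀).powersetCard s).biUnion
      (fun S => Finset.univ.filter (fun b => ∀ u ∈ S, E u b)) := by
    intro b hb
    rw [hRdef] at hb
    simp only [Finset.mem_filter, Finset.mem_univ, true_and] at hb
    choose f hf1 hf2 hf3 using hb
    have hinj : Function.Injective f := by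
      intro j j' h
      rw [← hf2 j, ← hf2 j', h]
    refine Finset.mem_biUnion.mpr ⟨Finset.image f Finset.univ, ?_, ?_⟩
    · rw [Finset.mem_powersetCard]
      constructor
      · intro a ha
        obtain ⟨j, -, rfl⟩ := Finset.mem_image.mp ha
        exact hf1 j
      · rw [Finset.card_image_of_injective _ hinj, Finset.card_univ, Fintype.card_fin]
    · simp only [Finset.mem_filter, Finset.mem_univ, true_and]
      intro u hu
      obtain ⟨j, -, rfl⟩ := Finset.mem_image.mp hu
      exact hf3 j
  have hCN : ∀ S ∈ (P i₀).powersetCard s,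
      ((Finset.univ.filter (fun b => ∀ u ∈ S, E u b)).card : ℝ) ≤ m := by
    intro S hS
    have hSc : S.card = s := (Finset.mem_powersetCard.mp hS).2
    have h1 := hcommon S hSc
    have h2 : ({v : B | ∀ u ∈ S, E u v} : Set B)
        = ↑(Finset.univ.filter (fun b => ∀ u ∈ S, E u b)) := by
      ext v; simp
    rwa [h2, Set.ncard_coe_finset] at h1
  have hRcard : (R.card : ℝ) ≤ (((P i₀).card : ℝ) ^ s) * m := by
    have h1 : R.card ≤ ∑ S ∈ (P i₀).powersetCard s,
        (Finset.univ.filter (fun b => ∀ u ∈ S, E u b)).card :=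
      le_trans (Finset.card_le_card hRsub) Finset.card_biUnion_le
    have h4 : ((P i₀).powersetCard s).card ≤ (P i₀).card ^ s := by
      rw [Finset.card_powersetCard]
      exact Nat.choose_le_pow _ _
    calc (R.card : ℝ) ≤ ((∑ S ∈ (P i₀).powersetCard s,
          (Finset.univ.filter (fun b => ∀ u ∈ S, E u b)).card : ℕ) : ℝ) := by
          exact_mod_cast h1
      _ ≤ ∑ S ∈ (P i₀).powersetCard s, m := by
          push_cast
          exact Finset.sum_le_sum hCN
      _ = (((P i₀).powersetCard s).card : ℝ) * m := by
          rw [Finset.sum_const, nsmul_eq_mul]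
      _ ≤ _ := by
          have : (((P i₀).powersetCard s).card : ℝ) ≤ ((P i₀).card : ℝ) ^ s := by
            exact_mod_cast h4
          exact mul_le_mul_of_nonneg_right this hm0
  -- numeric endgame
  have hσsq : Real.sqrt d * Real.sqrt d = d := Real.mul_self_sqrt (Nat.cast_nonneg d)
  have hσ0 : 0 ≤ Real.sqrt d := Real.sqrt_nonneg _
  have hσ1 : 1 ≤ Real.sqrt d := by nlinarith
  have hρσ : (d:ℝ) ^ ((1:ℝ)/(2*(s:ℝ))) ≤ Real.sqrt d := by
    rw [Real.sqrt_eq_rpow]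
    apply Real.rpow_le_rpow_of_exponent_le hd1
    have hs1 : (1:ℝ) ≤ s := by exact_mod_cast hs
    rw [div_le_div_iff₀ (by positivity) (by norm_num : (0:ℝ) < 2)]
    linarith
  have hpow : ((P i₀).card : ℝ) ^ s ≤ Real.sqrt d := by
    have hQ0 : (0:ℝ) ≤ (Q i₀).card := Nat.cast_nonneg _
    have hPle : ((P i₀).card : ℝ) ≤ (d:ℝ) ^ ((1:ℝ)/(2*(s:ℝ))) := by linarith
    have h0 : (0:ℝ) ≤ ((P i₀).card : ℝ) := Nat.cast_nonneg _
    have h1 : (((P i₀).card : ℝ)) ^ s ≤ ((d:ℝ) ^ ((1:ℝ)/(2*(s:ℝ)))) ^ s :=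
      pow_le_pow_left₀ h0 hPle s
    have h2 : ((d:ℝ) ^ ((1:ℝ)/(2*(s:ℝ)))) ^ s = Real.sqrt d := by
      rw [← Real.rpow_natCast ((d:ℝ) ^ ((1:ℝ)/(2*(s:ℝ)))) s,
        ← Real.rpow_mul (Nat.cast_nonneg d), Real.sqrt_eq_rpow]
      congr 1
      have hs0 : (s:ℝ) ≠ 0 := by positivity
      field_simp
    rw [h2] at h1
    exact h1
  have hQle : ((Q i₀).card : ℝ) ≤ Real.sqrt d := by
    have hP0 : (0:ℝ) ≤ (P i₀).card := Nat.cast_nonneg _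
    linarith
  have hBadcard : ((Bad.card : ℕ) : ℝ) ≤ ((Q i₀).card : ℝ) + (R.card : ℝ) := by
    have h1 : Bad.card ≤ ((Q i₀).image Prod.fst ∪ R).card := Finset.card_le_card hBadsub
    have h2 : ((Q i₀).image Prod.fst ∪ R).card ≤ ((Q i₀).image Prod.fst).card + R.card :=
      Finset.card_union_le _ _
    have h3 : ((Q i₀).image Prod.fst).card ≤ (Q i₀).card := Finset.card_image_le
    have h4 : Bad.card ≤ (Q i₀).card + R.card := by omega
    exact_mod_cast h4
  have hdR : (d:ℝ) ≤ (K.card : ℝ) + (Bad.card : ℝ) := by exact_mod_cast hdK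
  have hrr0 : (0:ℝ) ≤ (rr : ℝ) := Nat.cast_nonneg _
  have hBadlb : (1/2 + δ) * d ≤ (Bad.card : ℝ) := by linarith
  have hmσ : 1 + m < 2 * δ * Real.sqrt d := by linarith
  have hRm : (R.card : ℝ) ≤ m * Real.sqrt d := by
    calc (R.card : ℝ) ≤ (((P i₀).card : ℝ) ^ s) * m := hRcard
      _ ≤ Real.sqrt d * m := mul_le_mul_of_nonneg_right hpow hm0
      _ = m * Real.sqrt d := mul_comm _ _
  have hcontra : (1/2 + δ) * d < 2 * δ * d := by
    have hσ0' : 0 < Real.sqrt d := by linarith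
    calc (1/2 + δ) * d ≤ (Bad.card : ℝ) := hBadlb
      _ ≤ Real.sqrt d + m * Real.sqrt d := by linarith
      _ < 2 * δ * d := by nlinarith
  nlinarith [mul_pos (show (0:ℝ) < 1/2 - δ by linarith) hd0]
end

section
/- For every real number ε with 0 < ε < 1 there exists k₀ ∈ ℕ such that for every integer k ≥ k₀, setting c = ⌈k^{1 − ε/5}⌉ and d = (30·c²·(k+1)²)^{4k³ + 3c}, the inequality 1.1·(log(1.1·d^c))^{1/(4+ε)} < c/3 holds, where log denotes the natural logarithm. -/
open Real Filter

set_option maxHeartbeats 1600000 in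
/-- parameters in the proof of Theorem 1.3.
For every real `0 < ε < 1` there is `k₀` such that for every `k ≥ k₀`,
setting `c = ⌈k^{1 − ε/5}⌉` and `d = (30·c²·(k+1)²)^{4k³+3c}`, we have
`1.1·(log(1.1·d^c))^{1/(4+ε)} < c/3`. -/
theorem main2_parameters (ε : ℝ) (hε0 : 0 < ε) (hε1 : ε < 1) :
    ∃ k₀ : ℕ, ∀ k : ℕ, k₀ ≤ k → ∀ c d : ℕ,
      c = ⌈(k : ℝ) ^ (1 - ε / 5)⌉₊ →
      d = (30 * c ^ 2 * (k + 1) ^ 2) ^ (4 * k ^ 3 + 3 * c) →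
      1.1 * (Real.log (1.1 * (d : ℝ) ^ c)) ^ ((1 : ℝ) / (4 + ε)) <
        (c : ℝ) / 3 := by
  set β : ℝ := ε / 5 with hβdef
  have hβ0 : 0 < β := by positivity
  have hβ1 : β < 1 := by rw [hβdef]; linarith
  have h4ε : (0:ℝ) < 4 + ε := by linarith
  set α : ℝ := (1 - β) - 4 / (4 + ε) with hαdef
  clear_value α
  have hα0 : 0 < α := by
    rw [hαdef, sub_pos, div_lt_iff₀ h4ε, hβdef]
    nlinarith
  -- eventual conditions on the real line
  have E1 : ∀ᶠ x : ℝ in atTop, 1 + 112 * Real.log x ≤ x ^ β := by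
    have h := (isLittleO_log_rpow_atTop hβ0).def (by norm_num : (0:ℝ) < 1/113)
    filter_upwards [h, Real.tendsto_log_atTop.eventually_ge_atTop 1,
      eventually_ge_atTop (0:ℝ)] with x hx hlog hx0
    rw [Real.norm_eq_abs, Real.norm_eq_abs, abs_of_nonneg (by linarith),
      abs_of_nonneg (Real.rpow_nonneg hx0 β)] at hx
    nlinarith
  have E2 : ∀ᶠ x : ℝ in atTop, (4:ℝ) ≤ x ^ α :=
    (tendsto_rpow_atTop hα0).eventually_ge_atTop 4
  have E1n := (tendsto_natCast_atTop_atTop (R := ℝ)).eventually E1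
  have E2n := (tendsto_natCast_atTop_atTop (R := ℝ)).eventually E2
  obtain ⟨k₀, hk₀⟩ := eventually_atTop.mp (E1n.and (E2n.and (eventually_ge_atTop 4)))
  refine ⟨k₀, fun k hk c d hc hd => ?_⟩
  obtain ⟨h1, h2, h4⟩ := hk₀ k hk
  have hk4 : (4:ℝ) ≤ (k:ℝ) := by exact_mod_cast h4
  have hk1 : (1:ℝ) ≤ (k:ℝ) := by linarith
  have hk0 : (0:ℝ) < (k:ℝ) := by linarith
  -- facts about c
  have hc1 : (1:ℝ) ≤ (k:ℝ) ^ (1 - β) := Real.one_le_rpow hk1 (by linarith)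
  have hcge : (k:ℝ) ^ (1 - β) ≤ (c:ℝ) := by rw [hc]; exact Nat.le_ceil _
  have hcle2 : (c:ℝ) ≤ 2 * (k:ℝ) ^ (1 - β) := by
    have := Nat.ceil_lt_add_one (Real.rpow_nonneg hk0.le (1 - β))
    rw [hc]
    push_cast
    linarith [this]
  have hck : c ≤ k := by
    rw [hc]
    calc ⌈(k:ℝ) ^ (1 - β)⌉₊ ≤ ⌈(k:ℝ) ^ (1:ℝ)⌉₊ := by
          apply Nat.ceil_le_ceil
          exact Real.rpow_le_rpow_of_exponent_le hk1 (by linarith)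
      _ = k := by rw [Real.rpow_one, Nat.ceil_natCast]
  have hc0 : 0 < c := by
    exact_mod_cast lt_of_lt_of_le zero_lt_one (hc1.trans hcge)
  -- facts about d
  set B : ℕ := 30 * c ^ 2 * (k + 1) ^ 2 with hBdef
  set E : ℕ := 4 * k ^ 3 + 3 * c with hEdef
  clear_value B E
  have hB2 : 2 ≤ B := by
    rw [hBdef]
    nlinarith [Nat.one_le_pow 2 c hc0, Nat.one_le_pow 2 (k+1) (Nat.succ_pos k)]
  have hB1 : (1:ℝ) ≤ (B:ℝ) := by exact_mod_cast Nat.one_le_of_lt hB2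
  have hlogB0 : 0 ≤ Real.log B := Real.log_nonneg hB1
  -- B ≤ k ^ 8
  have hBk8 : (B:ℝ) ≤ (k:ℝ) ^ (8:ℕ) := by
    have hck' : (c:ℝ) ≤ (k:ℝ) := by exact_mod_cast hck
    have hc0' : (0:ℝ) ≤ (c:ℝ) := by positivity
    have hcc : (c:ℝ)^2 ≤ (k:ℝ)^2 := by nlinarith
    have hkk : ((k:ℝ)+1)^2 ≤ 4*(k:ℝ)^2 := by nlinarith
    have hk256 : (256:ℝ) ≤ (k:ℝ)^4 := by
      calc (256:ℝ) = 4^4 := by norm_num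
        _ ≤ (k:ℝ)^4 := pow_le_pow_left₀ (by norm_num) hk4 4
    have hmm : (c:ℝ)^2 * ((k:ℝ)+1)^2 ≤ (k:ℝ)^2 * (4*(k:ℝ)^2) :=
      mul_le_mul hcc hkk (by positivity) (by positivity)
    have hk40 : (0:ℝ) ≤ (k:ℝ)^4 := by positivity
    push_cast [hBdef]
    calc 30*(c:ℝ)^2*((k:ℝ)+1)^2 ≤ 120*(k:ℝ)^4 := by nlinarith
      _ ≤ (k:ℝ)^4 * (k:ℝ)^4 :=
          mul_le_mul_of_nonneg_right (by linarith : (120:ℝ) ≤ (k:ℝ)^4) hk40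
      _ = (k:ℝ)^(8:ℕ) := by ring
  have hlogB : Real.log B ≤ 8 * Real.log k := by
    calc Real.log B ≤ Real.log ((k:ℝ) ^ (8:ℕ)) :=
          Real.log_le_log (by linarith) hBk8
      _ = 8 * Real.log k := by rw [Real.log_pow]; push_cast; ring
  have hlogk0 : 0 ≤ Real.log k := Real.log_nonneg hk1
  -- the log of the big quantity
  have hd' : (d:ℝ) = (B:ℝ) ^ E := by rw [hd]; push_cast; ring
  have hdc1 : (1:ℝ) ≤ (d:ℝ) ^ c := by
    rw [hd']
    exact one_le_pow₀ (one_le_pow₀ hB1)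
  set L : ℝ := Real.log (1.1 * (d:ℝ) ^ c) with hLdef
  clear_value L
  have hLsplit : L = Real.log 1.1 + (c:ℝ) * ((E:ℝ) * Real.log B) := by
    rw [hLdef, Real.log_mul (by norm_num) (by linarith), hd', ← pow_mul,
      Real.log_pow]
    push_cast
    ring
  have hL0 : 0 < L := by
    rw [hLsplit]
    have := Real.log_pos (by norm_num : (1:ℝ) < 1.1)
    have hEc : (0:ℝ) ≤ (c:ℝ) * ((E:ℝ) * Real.log B) := by positivity
    linarith
  -- upper bound on E
  have hE7 : (E:ℝ) ≤ 7 * (k:ℝ) ^ (3:ℕ) := by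
    have hck' : (c:ℝ) ≤ (k:ℝ) := by exact_mod_cast hck
    push_cast [hEdef]
    nlinarith [sq_nonneg (k:ℝ)]
  -- key rpow identity: k^(1-β) * k^3 = k^(4-β)
  have hrid : (k:ℝ) ^ (1 - β) * (k:ℝ) ^ (3:ℕ) = (k:ℝ) ^ ((4:ℝ) - β) := by
    rw [← Real.rpow_natCast (k:ℝ) 3, ← Real.rpow_add hk0]
    congr 1
    ring
  have h4β1 : (1:ℝ) ≤ (k:ℝ) ^ ((4:ℝ) - β) := Real.one_le_rpow hk1 (by linarith)
  -- L ≤ k ^ 4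
  have hL4 : L ≤ (k:ℝ) ^ ((4:ℝ)) := by
    have hlog11 : Real.log 1.1 ≤ 1 := by
      have := Real.log_le_sub_one_of_pos (by norm_num : (0:ℝ) < 1.1)
      linarith
    have step1 : L ≤ 1 + (2 * (k:ℝ) ^ (1 - β)) * ((7 * (k:ℝ) ^ (3:ℕ)) * (8 * Real.log k)) := by
      rw [hLsplit]
      have h1' : (E:ℝ) * Real.log B ≤ (7 * (k:ℝ) ^ (3:ℕ)) * (8 * Real.log k) := by
        apply mul_le_mul hE7 hlogB hlogB0 (by positivity)
      have h2' : (c:ℝ) * ((E:ℝ) * Real.log B) ≤ (2 * (k:ℝ) ^ (1 - β)) * ((7 * (k:ℝ) ^ (3:ℕ)) * (8 * Real.log k)) := by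
        apply mul_le_mul hcle2 h1' (by positivity) (by positivity)
      linarith
    have step2 : 1 + (2 * (k:ℝ) ^ (1 - β)) * ((7 * (k:ℝ) ^ (3:ℕ)) * (8 * Real.log k))
        = 1 + 112 * ((k:ℝ) ^ ((4:ℝ) - β) * Real.log k) := by
      rw [← hrid]; ring
    have step3 : 1 + 112 * ((k:ℝ) ^ ((4:ℝ) - β) * Real.log k)
        ≤ (k:ℝ) ^ ((4:ℝ) - β) * (1 + 112 * Real.log k) := by
      nlinarith
    have step4 : (k:ℝ) ^ ((4:ℝ) - β) * (1 + 112 * Real.log k) ≤ (k:ℝ) ^ ((4:ℝ) - β) * (k:ℝ) ^ β := by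
      apply mul_le_mul_of_nonneg_left h1 (by positivity)
    have step5 : (k:ℝ) ^ ((4:ℝ) - β) * (k:ℝ) ^ β = (k:ℝ) ^ ((4:ℝ)) := by
      rw [← Real.rpow_add hk0]; norm_num
    linarith
  -- final computation
  have hexp0 : 0 < (1:ℝ) / (4 + ε) := by positivity
  have hmain : L ^ ((1:ℝ) / (4 + ε)) ≤ (k:ℝ) ^ ((4:ℝ) / (4 + ε)) := by
    calc L ^ ((1:ℝ) / (4 + ε)) ≤ ((k:ℝ) ^ ((4:ℝ))) ^ ((1:ℝ) / (4 + ε)) :=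
          Real.rpow_le_rpow hL0.le hL4 hexp0.le
      _ = (k:ℝ) ^ ((4:ℝ) / (4 + ε)) := by
          rw [← Real.rpow_mul hk0.le]
          congr 1
          field_simp
  have hsplit : (k:ℝ) ^ (1 - β) = (k:ℝ) ^ ((4:ℝ) / (4 + ε)) * (k:ℝ) ^ α := by
    rw [← Real.rpow_add hk0]
    congr 1
    rw [hαdef]; ring
  have hkpos : 0 < (k:ℝ) ^ ((4:ℝ) / (4 + ε)) := Real.rpow_pos_of_pos hk0 _
  have hfin : 1.1 * (k:ℝ) ^ ((4:ℝ) / (4 + ε)) < (c:ℝ) / 3 := by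
    have : (c:ℝ) ≥ (k:ℝ) ^ ((4:ℝ) / (4 + ε)) * 4 := by
      calc (c:ℝ) ≥ (k:ℝ) ^ (1 - β) := hcge
        _ = (k:ℝ) ^ ((4:ℝ) / (4 + ε)) * (k:ℝ) ^ α := hsplit
        _ ≥ (k:ℝ) ^ ((4:ℝ) / (4 + ε)) * 4 :=
            mul_le_mul_of_nonneg_left h2 hkpos.le
    nlinarith
  have hLle : 1.1 * L ^ ((1:ℝ) / (4 + ε)) ≤ 1.1 * (k:ℝ) ^ ((4:ℝ) / (4 + ε)) := by
    nlinarith [Real.rpow_nonneg hL0.le ((1:ℝ) / (4 + ε))]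
  linarith
end
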